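/- Let ω_N ⊂ S^d, d ≥ 1, be a 1-stiff configuration and let L be the linear subspace of ℝ^{d+1} spanned by ω_N. Then D_1(ω_N) = L^⊥ ∩ S^d. If k := dim L ≤ d-1, then D_1(ω_N) is the unit sphere of the (d+1-k)-dimensional subspace L^⊥; if k = d, then D_1(ω_N) = {a, -a} for some a ∈ S^d, and this two point set is itself a 1-stiff configuration. -/

import Mathlib

open MeasureTheory Metric
open scoped RealInnerProductSpace

noncomputable section

/-- `E n` is the Euclidean space `ℝ^n`; the unit sphere `S^{n-1}` is `Metric.sphere (0 : E n) 1`. -/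
abbrev E (n : ℕ) : Type := EuclideanSpace ℝ (Fin n)

/-- The surface area measure on the unit sphere of `ℝ^n`, normalized to be a probability
measure. -/
noncomputable def sphereUnif (n : ℕ) : Measure (sphere (0 : E n) 1) :=
  (((volume : Measure (E n)).toSphere) Set.univ)⁻¹ • (volume : Measure (E n)).toSphere

/-- `X` is a spherical `k`-design on the unit sphere of `ℝ^n`: all its points lie on the sphere
and every polynomial of total degree at most `k` has average over `X` equal to its average over
the sphere (with respect to the normalized surface area measure). -/
def IsSphericalDesign (n k : ℕ) (X : Finset (E n)) : Prop :=
  (↑X : Set (E n)) ⊆ sphere (0 : E n) 1 ∧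
    ∀ p : MvPolynomial (Fin n) ℝ, p.totalDegree ≤ k →
      (∑ x ∈ X, MvPolynomial.eval (fun i => x i) p) / (X.card : ℝ) =
        ∫ y, MvPolynomial.eval (fun i => (y : E n) i) p ∂(sphereUnif n)

/-- `Dm n m X` is the set of points `z` of the unit sphere of `ℝ^n` forming at most `m`
distinct dot products with the points of `X`. -/
def Dm (n m : ℕ) (X : Set (E n)) : Set (E n) :=
  {z | z ∈ sphere (0 : E n) 1 ∧ ∃ T : Finset ℝ, T.card ≤ m ∧ ∀ x ∈ X, ⟪z, x⟫ ∈ T}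

/-- `X` is an `m`-stiff configuration on the unit sphere of `ℝ^n`: it is a spherical
`(2m-1)`-design and some point of the sphere forms at most `m` distinct dot products with the
points of `X`. -/
def IsStiff (n m : ℕ) (X : Finset (E n)) : Prop :=
  IsSphericalDesign n (2 * m - 1) X ∧ (Dm n m ↑X).Nonempty

/-! Everything rests on antipodal symmetry. The normalized surface measure is invariant under
`y ↦ -y`, and a polynomial of degree at most one satisfies `p(x) + p(-x) = 2 p(0)`, so its
spherical average is `p(0)`. Applied to the coordinate functions, this shows that a `1`-design
has centroid `0`. Hence if `z` forms a single inner product `t` with all `N` points, then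
`N t = ⟪z, ∑ x⟫ = 0`, which gives `D_1(ω_N) = L^⊥ ∩ S^d`. The dimension statements follow from
`dim L + dim L^⊥ = d + 1`. When `dim L^⊥ = 1`, the unit sphere of `L^⊥` is a pair `{a, -a}`. By
the same symmetry this pair is a `1`-design, and any point of `ω_N`, being orthogonal to `a`, lies
in `D_1({a, -a})`. -/

theorem Finsupp.exists_eq_single_of_degree_eq_one {σ : Type*} {d : σ →₀ ℕ} (h : d.degree = 1) :
    ∃ i, d = Finsupp.single i 1 := by
  classical
  obtain ⟨i, hi⟩ := Multiset.card_eq_one.mp ((card_toMultiset d).trans h)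
  exact ⟨i, by rw [← toMultiset_toFinsupp d, hi, Multiset.toFinsupp_singleton]⟩

namespace MvPolynomial

theorem eval_add_eval_neg_of_totalDegree_le_one {σ R : Type*} [CommRing R]
    {p : MvPolynomial σ R} (hp : p.totalDegree ≤ 1) (x : σ → R) :
    eval x p + eval (-x) p = 2 * coeff 0 p := by
  conv_lhs => rw [p.as_sum]
  rw [map_sum, map_sum, ← Finset.sum_add_distrib, Finset.sum_eq_single 0]
  · simp [two_mul]
  · intro d hd hd0
    have hdeg : d.degree = 1 :=
      le_antisymm ((le_totalDegree hd).trans hp)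
        (Nat.one_le_iff_ne_zero.mpr ((Finsupp.degree_eq_zero_iff d).not.mpr hd0))
    obtain ⟨i, rfl⟩ := Finsupp.exists_eq_single_of_degree_eq_one hdeg
    rw [eval_monomial, eval_monomial, Finsupp.prod_single_index (by simp),
      Finsupp.prod_single_index (by simp)]
    simp
  · intro h0
    simp [notMem_support_iff.mp h0]

end MvPolynomial

theorem Submodule.mem_orthogonal_span_iff {F : Type*} [NormedAddCommGroup F]
    [InnerProductSpace ℝ F] {S : Set F} {z : F} :
    z ∈ (span ℝ S)ᗮ ↔ ∀ u ∈ S, ⟪u, z⟫ = 0 := by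
  refine ⟨fun h u hu => h u (subset_span hu), fun h u hu => ?_⟩
  have hle : span ℝ S ≤ (ℝ ∙ z)ᗮ :=
    span_le.mpr fun v hv => mem_orthogonal_singleton_iff_inner_left.mpr (h v hv)
  exact mem_orthogonal_singleton_iff_inner_left.mp (hle hu)

theorem Submodule.exists_inter_sphere_eq_pair_of_finrank_eq_one {F : Type*}
    [NormedAddCommGroup F] [NormedSpace ℝ F] {K : Submodule ℝ F} (hK : Module.finrank ℝ K = 1) :
    ∃ a : F, (K : Set F) ∩ sphere 0 1 = {a, -a} := by
  obtain ⟨v, hv0, -⟩ := finrank_eq_one_iff'.mp hK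
  set a : F := ‖(v : F)‖⁻¹ • (v : F)
  have ha : ‖a‖ = 1 := norm_smul_inv_norm (by simpa using hv0)
  have haK : a ∈ K := K.smul_mem _ v.2
  have hspan := (finrank_eq_one_iff_of_nonzero' (⟨a, haK⟩ : K)
    (by simp [← norm_ne_zero_iff, ha])).mp hK
  refine ⟨a, Set.ext fun z => ⟨?_, ?_⟩⟩
  · rintro ⟨hzK, hz⟩
    obtain ⟨c, hc⟩ := hspan ⟨z, hzK⟩
    have hcz : c • a = z := congrArg Subtype.val hc
    rw [← hcz, mem_sphere_zero_iff_norm, norm_smul, ha, mul_one, Real.norm_eq_abs] at hz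
    rcases (abs_eq zero_le_one).mp hz with rfl | rfl <;> simp [← hcz]
  · rintro (rfl | rfl | -)
    · exact ⟨haK, by simpa using ha⟩
    · exact ⟨K.neg_mem haK, by simpa using ha⟩

theorem MeasureTheory.Measure.toSphere_map_neg {F : Type*} [NormedAddCommGroup F]
    [NormedSpace ℝ F] [MeasurableSpace F] [BorelSpace F] (μ : Measure F) [μ.IsNegInvariant] :
    μ.toSphere.map Neg.neg = μ.toSphere := by
  ext s hs
  have hneg : Measurable (Neg.neg : sphere (0 : F) 1 → sphere (0 : F) 1) :=
    continuous_neg.measurable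
  have himage : ((↑) '' (Neg.neg ⁻¹' s) : Set F) = -((↑) '' s) := by
    ext x
    constructor
    · rintro ⟨y, hy, rfl⟩
      exact ⟨-y, hy, by simp⟩
    · rintro ⟨y, hy, hyx⟩
      exact ⟨-y, by simpa using hy, by simp [hyx]⟩
  rw [Measure.map_apply hneg hs, μ.toSphere_apply' (hneg hs), μ.toSphere_apply' hs, himage,
    Set.smul_neg, Measure.measure_neg]

theorem sphereUnif_map_neg (n : ℕ) : (sphereUnif n).map Neg.neg = sphereUnif n := by
  rw [sphereUnif, Measure.map_smul, Measure.toSphere_map_neg]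

instance isProbabilityMeasure_sphereUnif (n : ℕ) [NeZero n] :
    IsProbabilityMeasure (sphereUnif n) := by
  constructor
  rw [sphereUnif, Measure.smul_apply, smul_eq_mul]
  exact ENNReal.inv_mul_cancel (Measure.measure_univ_ne_zero.mpr (Measure.toSphere_ne_zero _))
    (measure_ne_top _ _)

theorem integral_sphereUnif_comp_neg (n : ℕ) (f : sphere (0 : E n) 1 → ℝ) :
    ∫ y, f (-y) ∂(sphereUnif n) = ∫ y, f y ∂(sphereUnif n) :=
  MeasurePreserving.integral_comp ⟨continuous_neg.measurable, sphereUnif_map_neg n⟩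
    (Homeomorph.neg _).measurableEmbedding f

theorem integral_sphereUnif_eval_of_totalDegree_le_one (n : ℕ) [NeZero n]
    {p : MvPolynomial (Fin n) ℝ} (hp : p.totalDegree ≤ 1) :
    ∫ y, MvPolynomial.eval (fun i => (y : E n) i) p ∂(sphereUnif n) = p.coeff 0 := by
  set f : sphere (0 : E n) 1 → ℝ := fun y => MvPolynomial.eval (fun i => (y : E n) i) p
  have hcont : Continuous f := (MvPolynomial.continuous_eval p).comp (by fun_prop)
  have hint : ∀ g : sphere (0 : E n) 1 → ℝ, Continuous g → Integrable g (sphereUnif n) :=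
    fun g hg => hg.integrable_of_hasCompactSupport (HasCompactSupport.of_compactSpace g)
  have hpair : ∀ y, f y + f (-y) = 2 * p.coeff 0 := fun y => by
    have hneg : (fun i => ((-y : sphere (0 : E n) 1) : E n) i) = -fun i => (y : E n) i := rfl
    simp only [f, hneg]
    exact MvPolynomial.eval_add_eval_neg_of_totalDegree_le_one hp _
  have hsum : ∫ y, (f y + f (-y)) ∂(sphereUnif n) = 2 * p.coeff 0 := by
    simp [hpair]
  rw [integral_add (hint f hcont) (hint (fun y => f (-y)) (hcont.comp continuous_neg)),
    integral_sphereUnif_comp_neg n f] at hsum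
  linarith

theorem IsSphericalDesign.sum_eq_zero {n k : ℕ} [NeZero n] {X : Finset (E n)}
    (hX : IsSphericalDesign n k X) (hk : 1 ≤ k) : ∑ x ∈ X, x = 0 := by
  ext i
  have h := hX.2 (MvPolynomial.X i) ((MvPolynomial.totalDegree_X i).trans_le hk)
  rw [integral_sphereUnif_eval_of_totalDegree_le_one n (MvPolynomial.totalDegree_X i).le,
    MvPolynomial.coeff_zero_X] at h
  simp only [MvPolynomial.eval_X] at h
  rcases div_eq_zero_iff.mp h with h | h
  · simpa [WithLp.ofLp_sum] using h
  · simp [Finset.card_eq_zero.mp (by exact_mod_cast h)]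

theorem isSphericalDesign_one_of_neg_mem {n : ℕ} [NeZero n] {X : Finset (E n)}
    (hne : X.Nonempty) (hX : (X : Set (E n)) ⊆ sphere 0 1) (hneg : ∀ x ∈ X, -x ∈ X) :
    IsSphericalDesign n 1 X := by
  refine ⟨hX, fun p hp => ?_⟩
  rw [integral_sphereUnif_eval_of_totalDegree_le_one n hp,
    div_eq_iff (Nat.cast_ne_zero.mpr hne.card_pos.ne')]
  set g : E n → ℝ := fun x => MvPolynomial.eval (fun i => x i) p
  have hsymm : ∑ x ∈ X, g (-x) = ∑ x ∈ X, g x :=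
    Finset.sum_nbij' Neg.neg Neg.neg hneg hneg (by simp) (by simp) (by simp)
  have hpair : ∑ x ∈ X, (g x + g (-x)) = ∑ x ∈ X, 2 * p.coeff 0 :=
    Finset.sum_congr rfl fun x _ =>
      MvPolynomial.eval_add_eval_neg_of_totalDegree_le_one hp (fun i => x i)
  rw [Finset.sum_add_distrib, hsymm, Finset.sum_const, nsmul_eq_mul] at hpair
  linarith

theorem orthogonal_inter_sphere_subset_Dm {n m : ℕ} (hm : 1 ≤ m) (X : Set (E n)) :
    ((Submodule.span ℝ X)ᗮ : Set (E n)) ∩ sphere 0 1 ⊆ Dm n m X := by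
  rintro z ⟨hzX, hz⟩
  refine ⟨hz, {0}, hm, fun x hx => ?_⟩
  rw [Finset.mem_singleton, real_inner_comm]
  exact Submodule.mem_orthogonal_span_iff.mp hzX x hx

theorem Dm_one_eq_orthogonal_inter_sphere {n : ℕ} {X : Finset (E n)} (hX : ∑ x ∈ X, x = 0) :
    Dm n 1 X = ((Submodule.span ℝ (X : Set (E n)))ᗮ : Set (E n)) ∩ sphere 0 1 := by
  refine Set.Subset.antisymm ?_ (orthogonal_inter_sphere_subset_Dm le_rfl _)
  rintro z ⟨hz, T, hT, hzT⟩
  refine ⟨Submodule.mem_orthogonal_span_iff.mpr fun x hx => ?_, hz⟩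
  have hconst : ∀ y ∈ X, ⟪z, y⟫ = ⟪z, x⟫ := fun y hy =>
    Finset.card_le_one.mp hT _ (hzT y hy) _ (hzT x hx)
  have hsum : ⟪z, ∑ y ∈ X, y⟫ = ∑ y ∈ X, ⟪z, y⟫ := inner_sum X (fun y => y) z
  rw [hX, inner_zero_right, Finset.sum_congr rfl hconst, Finset.sum_const, nsmul_eq_mul] at hsum
  rw [real_inner_comm]
  exact (mul_eq_zero.mp hsum.symm).resolve_left
    (Nat.cast_ne_zero.mpr (Finset.card_ne_zero_of_mem hx))

theorem isStiff_one_pair {n : ℕ} [NeZero n] [DecidableEq (E n)] {a z : E n}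
    (ha : a ∈ sphere (0 : E n) 1) (hz : z ∈ sphere (0 : E n) 1) (haz : ⟪a, z⟫ = 0) :
    IsStiff n 1 {a, -a} := by
  have hsphere : (({a, -a} : Finset (E n)) : Set (E n)) ⊆ sphere 0 1 := by
    simp_all [Set.insert_subset_iff]
  refine ⟨isSphericalDesign_one_of_neg_mem (Finset.insert_nonempty _ _) hsphere (by simp),
    z, orthogonal_inter_sphere_subset_Dm le_rfl _ ⟨?_, hz⟩⟩
  simp [Submodule.mem_orthogonal_span_iff, haz]

theorem dual_of_one_stiff (d : ℕ) [DecidableEq (E (d + 1))]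
    (X : Finset (E (d + 1))) (hne : X.Nonempty) (hstiff : IsStiff (d + 1) 1 X) :
    Dm (d + 1) 1 ↑X =
        ((Submodule.span ℝ (↑X : Set (E (d + 1))))ᗮ : Set (E (d + 1)))
          ∩ sphere (0 : E (d + 1)) 1 ∧
      ((Module.finrank ℝ (Submodule.span ℝ (↑X : Set (E (d + 1))))) ≤ d - 1 →
        Module.finrank ℝ ((Submodule.span ℝ (↑X : Set (E (d + 1))))ᗮ)
          = d + 1 - Module.finrank ℝ (Submodule.span ℝ (↑X : Set (E (d + 1))))) ∧
      ((Module.finrank ℝ (Submodule.span ℝ (↑X : Set (E (d + 1))))) = d →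
        ∃ a : E (d + 1), a ∈ sphere (0 : E (d + 1)) 1 ∧
          Dm (d + 1) 1 ↑X = {a, -a} ∧
          IsStiff (d + 1) 1 ({a, -a} : Finset (E (d + 1)))) := by
  obtain ⟨hdesign, -⟩ := hstiff
  set L := Submodule.span ℝ (X : Set (E (d + 1)))
  have hdual : Dm (d + 1) 1 ↑X = (Lᗮ : Set (E (d + 1))) ∩ sphere 0 1 :=
    Dm_one_eq_orthogonal_inter_sphere (hdesign.sum_eq_zero le_rfl)
  have hdim : Module.finrank ℝ L + Module.finrank ℝ Lᗮ = d + 1 := by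
    simpa using L.finrank_add_finrank_orthogonal
  refine ⟨hdual, fun _ => by omega, fun hk => ?_⟩
  obtain ⟨a, ha⟩ := Submodule.exists_inter_sphere_eq_pair_of_finrank_eq_one (K := Lᗮ) (by omega)
  obtain ⟨haL, hasphere⟩ : a ∈ (Lᗮ : Set (E (d + 1))) ∩ sphere 0 1 :=
    ha ▸ Set.mem_insert a {-a}
  obtain ⟨x, hx⟩ := hne
  exact ⟨a, hasphere, hdual.trans ha, isStiff_one_pair hasphere (hdesign.1 hx)
    (Submodule.inner_left_of_mem_orthogonal (Submodule.subset_span hx) haL)⟩
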